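/- For the suspended pinch point orbifold family entry #8, the minimized volume is 1/(3√3), attained at (b₁, b₂) = (−(3/2)(√3 − 1), (3 − √3)/2). -/
import Mathlib


/-- The volume function of reflexive polygon #8 (suspended pinch point family),
with `b₃ = 3`. -/
noncomputable def VSPP (b₁ b₂ : ℝ) : ℝ :=
  2 * (9 - b₁ - b₂) /
    ((3 + b₂ - b₁) * (3 - b₂) * (3 - b₁ - b₂) * (3 + b₁ + b₂))

/-- For entry #8, the minimized volume is `1/(3√3)`, attained at
`(b₁, b₂) = (−(3/2)(√3 − 1), (3 − √3)/2)`. -/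
theorem volume_min_SPP :
    (∀ b₁ b₂ : ℝ, 0 < 3 + b₂ - b₁ → 0 < 3 - b₂ → 0 < 3 - b₁ - b₂ →
      0 < 3 + b₁ + b₂ →
      1 / (3 * Real.sqrt 3) ≤ VSPP b₁ b₂) ∧
    VSPP (-(3 / 2) * (Real.sqrt 3 - 1)) ((3 - Real.sqrt 3) / 2) =
      1 / (3 * Real.sqrt 3) := by
  have hs : Real.sqrt 3 ^ 2 = 3 := Real.sq_sqrt (by norm_num)
  have hs1 : (1 : ℝ) < Real.sqrt 3 := by
    nlinarith [Real.sqrt_nonneg 3]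
  set s := Real.sqrt 3 with hsdef
  constructor
  · intro b₁ b₂ h1 h2 h3 h4
    unfold VSPP
    rw [div_le_div_iff₀ (by positivity) (by positivity)]
    have key : 2 * (9 - b₁ - b₂) * (3 * s)
        - (3 + b₂ - b₁) * (3 - b₂) * (3 - b₁ - b₂) * (3 + b₁ + b₂)
        = ((3 - b₁ - b₂) * (3 + b₁ + b₂) * (3 + b₁ - 3 * b₂) ^ 2
          + (9 - b₁ - b₂) * (3 - b₁ - b₂ - 2 * s) ^ 2 * (3 - b₁ - b₂ + 4 * s)) / 8 := by
      linear_combination (((16 * b₁ + 16 * b₂ - 144) * s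
        + 12 * b₁ ^ 2 + 24 * b₁ * b₂ + 12 * b₂ ^ 2 - 144 * b₁ - 144 * b₂ + 324) / 8) * hs
    have t1 : 0 ≤ (3 - b₁ - b₂) * (3 + b₁ + b₂) * (3 + b₁ - 3 * b₂) ^ 2 :=
      mul_nonneg (mul_nonneg h3.le h4.le) (sq_nonneg _)
    have t2 : 0 ≤ (9 - b₁ - b₂) * (3 - b₁ - b₂ - 2 * s) ^ 2 * (3 - b₁ - b₂ + 4 * s) :=
      mul_nonneg (mul_nonneg (by linarith) (sq_nonneg _)) (by linarith)
    linarith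
  · unfold VSPP
    have hnum : 2 * (9 - -(3 / 2) * (s - 1) - (3 - s) / 2) = 12 + 4 * s := by ring
    have hD : (3 + (3 - s) / 2 - -(3 / 2) * (s - 1)) * (3 - (3 - s) / 2) *
        (3 - -(3 / 2) * (s - 1) - (3 - s) / 2) *
        (3 + -(3 / 2) * (s - 1) + (3 - s) / 2) = 36 * s + 36 := by
      linear_combination (-2 * s ^ 2 - 6 * s + 12) * hs
    rw [hnum, hD, div_eq_div_iff (by linarith) (by linarith)]
    linear_combination 12 * hs
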